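/- For any η > 0, the maximum over α > -1/2 of the function F(α) = e^{-(α²/2 + α + 1/2) η²} · log(1 + e^{(α + 1/2) η²}) is comparable to e^{-η²/8} as η → ∞: there exist absolute constants 0 < c ≤ C and η₀ such that for all η ≥ η₀, c · e^{-η²/8} ≤ sup_{α > -1/2} F(α) ≤ C · e^{-η²/8}. -/

import Mathlib

/-!
Writing `s = α + 1/2 > 0` and `t = s η²`, the exponent splits as
`-(α²/2 + α + 1/2) η² = -η²/8 - s²η²/2 - t/2`, so
`F(α) = e^{-η²/8} · e^{-s²η²/2} · e^{-t/2} log(1 + e^t)`.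
The middle factor is at most `1` and the last at most `2`, since `log(1 + e^t) ≤ 2 e^{t/2}`;
conversely, at `t = 1` (i.e. `s = η⁻²`) the last two factors are bounded below by constants
once `η ≥ 1`.
-/

open Real Set

noncomputable def logExpProfile (η α : ℝ) : ℝ :=
  exp (-(α ^ 2 / 2 + α + 1 / 2) * η ^ 2) * log (1 + exp ((α + 1 / 2) * η ^ 2))

lemma log_one_add_exp_le_two_mul_exp_half (t : ℝ) : log (1 + exp t) ≤ 2 * exp (t / 2) := by
  have hsq : exp (t / 2) ^ 2 = exp t := by rw [← exp_nat_mul]; ring_nf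
  calc log (1 + exp t) ≤ log ((1 + exp (t / 2)) ^ 2) :=
        log_le_log (by positivity) (by nlinarith [exp_pos (t / 2)])
    _ = 2 * log (1 + exp (t / 2)) := by rw [log_pow]; norm_num
    _ ≤ 2 * exp (t / 2) := by
        linarith [log_le_sub_one_of_pos (by positivity : 0 < 1 + exp (t / 2))]

lemma exp_neg_half_mul_log_one_add_exp_le_two (t : ℝ) :
    exp (-(t / 2)) * log (1 + exp t) ≤ 2 := by
  calc exp (-(t / 2)) * log (1 + exp t) ≤ exp (-(t / 2)) * (2 * exp (t / 2)) :=
        mul_le_mul_of_nonneg_left (log_one_add_exp_le_two_mul_exp_half t) (exp_pos _).le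
    _ = 2 := by rw [mul_left_comm, ← exp_add]; simp

lemma logExpProfile_eq (η α : ℝ) :
    logExpProfile η α = exp (-η ^ 2 / 8) * exp (-((α + 1 / 2) * η) ^ 2 / 2) *
      (exp (-((α + 1 / 2) * η ^ 2 / 2)) * log (1 + exp ((α + 1 / 2) * η ^ 2))) := by
  rw [logExpProfile, ← mul_assoc, ← exp_add, ← exp_add]
  ring_nf

lemma logExpProfile_le (η α : ℝ) : logExpProfile η α ≤ 2 * exp (-η ^ 2 / 8) := by
  have hgauss : exp (-((α + 1 / 2) * η) ^ 2 / 2) ≤ 1 :=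
    exp_le_one_iff.mpr (by nlinarith [sq_nonneg ((α + 1 / 2) * η)])
  have hlog : 0 ≤ log (1 + exp ((α + 1 / 2) * η ^ 2)) :=
    log_nonneg (by linarith [exp_pos ((α + 1 / 2) * η ^ 2)])
  rw [logExpProfile_eq]
  calc _ ≤ exp (-η ^ 2 / 8) * 1 * 2 := by
        gcongr
        exact exp_neg_half_mul_log_one_add_exp_le_two _
    _ = 2 * exp (-η ^ 2 / 8) := by ring

lemma exp_neg_one_mul_le_logExpProfile {η : ℝ} (hη : 1 ≤ η) :
    exp (-1) * exp (-η ^ 2 / 8) ≤ logExpProfile η (1 / η ^ 2 - 1 / 2) := by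
  have hη2 : 1 ≤ η ^ 2 := by nlinarith
  have ht : (1 / η ^ 2 - 1 / 2 + 1 / 2) * η ^ 2 = 1 := by field_simp; ring
  have hexp : -1 + -η ^ 2 / 8 ≤
      -((1 / η ^ 2 - 1 / 2) ^ 2 / 2 + (1 / η ^ 2 - 1 / 2) + 1 / 2) * η ^ 2 := by
    have hinv : 1 / η ^ 2 ≤ 1 := by rw [div_le_one (by positivity)]; exact hη2
    have : -((1 / η ^ 2 - 1 / 2) ^ 2 / 2 + (1 / η ^ 2 - 1 / 2) + 1 / 2) * η ^ 2
        = -(1 / η ^ 2 / 2 + 1 / 2 + η ^ 2 / 8) := by field_simp; ring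
    linarith
  have hlog : 1 ≤ log (1 + exp 1) := by
    rw [le_log_iff_exp_le (by positivity)]
    linarith
  rw [logExpProfile, ht, ← exp_add, ← mul_one (exp (-1 + _))]
  exact mul_le_mul (exp_le_exp.mpr hexp) hlog zero_le_one (exp_pos _).le

theorem stmt7 : ∃ c C η₀ : ℝ, 0 < c ∧ c ≤ C ∧ ∀ η : ℝ, η₀ ≤ η →
    c * Real.exp (-η ^ 2 / 8)
      ≤ sSup ((fun α : ℝ => Real.exp (-(α ^ 2 / 2 + α + 1 / 2) * η ^ 2)
          * Real.log (1 + Real.exp ((α + 1 / 2) * η ^ 2))) '' Set.Ioi (-(1 / 2) : ℝ)) ∧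
    sSup ((fun α : ℝ => Real.exp (-(α ^ 2 / 2 + α + 1 / 2) * η ^ 2)
          * Real.log (1 + Real.exp ((α + 1 / 2) * η ^ 2))) '' Set.Ioi (-(1 / 2) : ℝ))
      ≤ C * Real.exp (-η ^ 2 / 8) := by
  refine ⟨exp (-1), 2, 1, exp_pos _,
    by linarith [exp_le_one_iff.mpr (by norm_num : (-1 : ℝ) ≤ 0)], fun η hη => ?_⟩
  change exp (-1) * _ ≤ sSup (logExpProfile η '' _) ∧ sSup (logExpProfile η '' _) ≤ _
  have hbdd : BddAbove (logExpProfile η '' Ioi (-(1 / 2))) :=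
    ⟨_, forall_mem_image.mpr fun α _ => logExpProfile_le η α⟩
  have hmem : 1 / η ^ 2 - 1 / 2 ∈ Ioi (-(1 / 2) : ℝ) := by
    have : 0 < 1 / η ^ 2 := by positivity
    simp only [mem_Ioi]; linarith
  exact ⟨(exp_neg_one_mul_le_logExpProfile hη).trans (le_csSup hbdd (mem_image_of_mem _ hmem)),
    csSup_le (Nonempty.image _ ⟨_, hmem⟩) (forall_mem_image.mpr fun α _ =>
      logExpProfile_le η α)⟩
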